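/- Let A be a Pickands dependence function that is twice continuously differentiable on (0,1) with M = sup_{0<t<1} t(1−t) A″(t) < ∞, and let C(u,v) = exp( log(uv) · A( log(v)/log(uv) ) ) for (u,v) ∈ (0,1)². Then for every (u,v) ∈ (0,1)², the second-order partial derivative ∂²C/∂u² exists and equals ∂²C/∂u² (u,v) = ( C(u,v)/u² ) · ( −μ(t)(1 − μ(t)) + t²(1−t) A″(t)/log(u) ), with t = log(v)/log(uv) and μ(t) = A(t) − t A′(t), and it satisfies 0 ≤ −∂²C/∂u² (u,v) ≤ (1 + M) / ( u(1−u) ); moreover, for each fixed u ∈ (0,1), ∂²C/∂u² (u,v) → 0 as v ↓ 0 and as v ↑ 1. -/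

import Mathlib

open Set Filter
open scoped Topology

noncomputable section

/-- The bivariate extreme-value copula `C(u,v) = exp(log(uv) · A(log v / log(uv)))`
associated with a Pickands dependence function `A`. -/
def evCopula2 (A : ℝ → ℝ) (u v : ℝ) : ℝ :=
  Real.exp (Real.log (u * v) * A (Real.log v / Real.log (u * v)))

/-- `t = log(v)/log(uv)`. -/
def pickT (u v : ℝ) : ℝ := Real.log v / Real.log (u * v)

/-- `μ(t) = A(t) − t A′(t)`. -/
def pickMu (A A' : ℝ → ℝ) (t : ℝ) : ℝ := A t - t * A' t

/-- The claimed value of the second-order partial derivative `∂²C/∂u²`: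
`(C(u,v)/u²) (−μ(t)(1−μ(t)) + t²(1−t)A″(t)/log u)`. -/
def evSecondUU (A A' A'' : ℝ → ℝ) (u v : ℝ) : ℝ :=
  evCopula2 A u v / u ^ 2 *
    (-(pickMu A A' (pickT u v) * (1 - pickMu A A' (pickT u v))) +
      pickT u v ^ 2 * (1 - pickT u v) * A'' (pickT u v) / Real.log u)

/-! With `t = log v / log (uv)` one has `∂t/∂u = -t / (u log (uv))`, so the exponent
`log (uv) · A(t)` has `u`-derivative `μ(t)/u`, giving `∂C/∂u = C μ(t)/u`; differentiating once more,
`∂μ(t)/∂u = t² A″(t) / (u log (uv))` and `log u = (1 - t) log (uv)` give the formula.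

Convexity and `max(t, 1-t) ≤ A ≤ 1` give `A″ ≥ 0`, `0 ≤ μ ≤ 1` and `1 - μ ≤ 2t`, while `A(t) ≥ 1 - t`
and `A(t) ≥ t` say exactly `C ≤ u` and `C ≤ v`. Hence in
`-∂²C/∂u² = (C/u²) (μ(1-μ) + t · t(1-t)A″(t) / (-log u))` both terms are nonnegative, and
`-log u ≥ 1 - u` gives the bound. As `v ↓ 0` the factor `C ≤ v` vanishes; as `v ↑ 1`, `t → 0` and
both terms are `O(t)`. -/

theorem ConvexOn.nonneg_of_hasDerivAt_of_hasDerivAt {s : Set ℝ} {f f' : ℝ → ℝ} {x f'' : ℝ}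
    (hf : ConvexOn ℝ s f) (hs : IsOpen s) (hf' : ∀ y ∈ s, HasDerivAt f (f' y) y)
    (hx : x ∈ s) (hf'' : HasDerivAt f' f'' x) : 0 ≤ f'' := by
  have hmono : MonotoneOn f' s :=
    (hf.monotoneOn_deriv fun y hy => (hf' y hy).differentiableAt).congr
      fun y hy => (hf' y hy).deriv
  have hacc : AccPt x (𝓟 s) := by
    simpa using (PerfectSpace.univ_preperfect x (mem_univ x)).nhds_inter (hs.mem_nhds hx)
  exact hf''.hasDerivWithinAt.nonneg_of_monotoneOn hacc hmono

structure IsPickandsFunction (A : ℝ → ℝ) : Prop where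
  convexOn : ConvexOn ℝ (Icc 0 1) A
  max_le : ∀ t ∈ Icc (0 : ℝ) 1, max t (1 - t) ≤ A t
  le_one : ∀ t ∈ Icc (0 : ℝ) 1, A t ≤ 1

namespace IsPickandsFunction

variable {A A' : ℝ → ℝ} {t d : ℝ}

theorem apply_zero (hP : IsPickandsFunction A) : A 0 = 1 :=
  le_antisymm (hP.le_one 0 (by simp)) (by simpa using hP.max_le 0 (by simp))

theorem le_apply (hP : IsPickandsFunction A) (ht : t ∈ Icc (0 : ℝ) 1) : t ≤ A t :=
  (le_max_left _ _).trans (hP.max_le t ht)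

theorem one_sub_le_apply (hP : IsPickandsFunction A) (ht : t ∈ Icc (0 : ℝ) 1) : 1 - t ≤ A t :=
  (le_max_right _ _).trans (hP.max_le t ht)

theorem le_one_of_hasDerivAt (hP : IsPickandsFunction A) (ht : t ∈ Ioo (0 : ℝ) 1)
    (hd : HasDerivAt A d t) : d ≤ 1 := by
  have hslope : d ≤ slope A t 1 :=
    hP.convexOn.le_slope_of_hasDerivAt (Ioo_subset_Icc_self ht) (by simp) ht.2 hd
  have hA1 := hP.le_one 1 (by simp)
  have hAt := hP.le_apply (Ioo_subset_Icc_self ht)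
  rw [slope_def_field, le_div_iff₀ (sub_pos.2 ht.2)] at hslope
  nlinarith [ht.2]

theorem sub_one_le_mul_of_hasDerivAt (hP : IsPickandsFunction A) (ht : t ∈ Ioo (0 : ℝ) 1)
    (hd : HasDerivAt A d t) : A t - 1 ≤ t * d := by
  have hslope : slope A 0 t ≤ d :=
    hP.convexOn.slope_le_of_hasDerivAt (by simp) (Ioo_subset_Icc_self ht) ht.1 hd
  rw [slope_def_field, hP.apply_zero, sub_zero, div_le_iff₀ ht.1] at hslope
  linarith

theorem pickMu_mem_Icc (hP : IsPickandsFunction A) (ht : t ∈ Ioo (0 : ℝ) 1)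
    (hA : HasDerivAt A (A' t) t) : pickMu A A' t ∈ Icc 0 1 := by
  have hd := hP.le_one_of_hasDerivAt ht hA
  have hAt := hP.le_apply (Ioo_subset_Icc_self ht)
  have := hP.sub_one_le_mul_of_hasDerivAt ht hA
  constructor <;> unfold pickMu <;> nlinarith [ht.1]

theorem one_sub_pickMu_le (hP : IsPickandsFunction A) (ht : t ∈ Ioo (0 : ℝ) 1)
    (hA : HasDerivAt A (A' t) t) : 1 - pickMu A A' t ≤ 2 * t := by
  have hd := hP.le_one_of_hasDerivAt ht hA
  have hAt := hP.one_sub_le_apply (Ioo_subset_Icc_self ht)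
  unfold pickMu
  nlinarith [ht.1]

theorem secondDeriv_nonneg {A'' : ℝ → ℝ} (hP : IsPickandsFunction A)
    (hA' : ∀ t ∈ Ioo (0 : ℝ) 1, HasDerivAt A (A' t) t) (ht : t ∈ Ioo (0 : ℝ) 1)
    (hA'' : HasDerivAt A' (A'' t) t) : 0 ≤ A'' t :=
  (hP.convexOn.subset Ioo_subset_Icc_self (convex_Ioo 0 1)).nonneg_of_hasDerivAt_of_hasDerivAt
    isOpen_Ioo hA' ht hA''

theorem nonneg_of_mul_secondDeriv_le {A'' : ℝ → ℝ} {M : ℝ}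
    (hP : IsPickandsFunction A) (hA' : ∀ t ∈ Ioo (0 : ℝ) 1, HasDerivAt A (A' t) t)
    (hA'' : ∀ t ∈ Ioo (0 : ℝ) 1, HasDerivAt A' (A'' t) t)
    (hM : ∀ t ∈ Ioo (0 : ℝ) 1, t * (1 - t) * A'' t ≤ M) : 0 ≤ M := by
  have ht : (1 / 2 : ℝ) ∈ Ioo 0 1 := by norm_num
  have := hP.secondDeriv_nonneg hA' ht (hA'' _ ht)
  linarith [hM _ ht]

end IsPickandsFunction

section Copula

variable {A A' A'' : ℝ → ℝ} {u v : ℝ}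

theorem log_mul_neg (hu : u ∈ Ioo (0 : ℝ) 1) (hv : v ∈ Ioo (0 : ℝ) 1) :
    Real.log (u * v) < 0 :=
  Real.log_neg (mul_pos hu.1 hv.1) (mul_lt_one_of_nonneg_of_lt_one_left hu.1.le hu.2 hv.2.le)

theorem pickT_mem_Ioo (hu : u ∈ Ioo (0 : ℝ) 1) (hv : v ∈ Ioo (0 : ℝ) 1) :
    pickT u v ∈ Ioo 0 1 := by
  have hL := log_mul_neg hu hv
  have hLu := Real.log_neg hu.1 hu.2
  have hLv := Real.log_neg hv.1 hv.2
  rw [Real.log_mul hu.1.ne' hv.1.ne'] at hL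
  refine ⟨div_pos_of_neg_of_neg hLv ?_, (div_lt_one_of_neg ?_).2 ?_⟩ <;>
    rw [Real.log_mul hu.1.ne' hv.1.ne'] <;> linarith

theorem log_eq_one_sub_pickT_mul (hu : 0 < u) (hv : 0 < v) (hL : Real.log (u * v) ≠ 0) :
    Real.log u = (1 - pickT u v) * Real.log (u * v) := by
  rw [sub_mul, pickT, div_mul_cancel₀ _ hL, Real.log_mul hu.ne' hv.ne']
  ring

theorem evCopula2_pos : 0 < evCopula2 A u v := Real.exp_pos _

theorem evCopula2_le_left (hP : IsPickandsFunction A) (hu : u ∈ Ioo (0 : ℝ) 1)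
    (hv : v ∈ Ioo (0 : ℝ) 1) : evCopula2 A u v ≤ u := by
  have hL := log_mul_neg hu hv
  have hA := hP.one_sub_le_apply (Ioo_subset_Icc_self (pickT_mem_Ioo hu hv))
  calc evCopula2 A u v ≤ Real.exp (Real.log (u * v) * (1 - pickT u v)) :=
        Real.exp_le_exp.2 (mul_le_mul_of_nonpos_left hA hL.le)
    _ = u := by rw [mul_comm, ← log_eq_one_sub_pickT_mul hu.1 hv.1 hL.ne, Real.exp_log hu.1]

theorem evCopula2_le_right (hP : IsPickandsFunction A) (hu : u ∈ Ioo (0 : ℝ) 1)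
    (hv : v ∈ Ioo (0 : ℝ) 1) : evCopula2 A u v ≤ v := by
  have hL := log_mul_neg hu hv
  have hA := hP.le_apply (Ioo_subset_Icc_self (pickT_mem_Ioo hu hv))
  calc evCopula2 A u v ≤ Real.exp (Real.log (u * v) * pickT u v) :=
        Real.exp_le_exp.2 (mul_le_mul_of_nonpos_left hA hL.le)
    _ = v := by rw [mul_comm, pickT, div_mul_cancel₀ _ hL.ne, Real.exp_log hv.1]

theorem evCopula2_div_sq_le (hP : IsPickandsFunction A) (hu : u ∈ Ioo (0 : ℝ) 1)
    (hv : v ∈ Ioo (0 : ℝ) 1) : evCopula2 A u v / u ^ 2 ≤ 1 / u :=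
  (div_le_div_of_nonneg_right (evCopula2_le_left hP hu hv) (sq_nonneg u)).trans_eq
    (by field_simp)

theorem hasDerivAt_log_mul_right (hu : 0 < u) (hv : 0 < v) :
    HasDerivAt (fun x => Real.log (x * v)) u⁻¹ u :=
  (((hasDerivAt_id u).mul_const v).log (by positivity)).congr_deriv (by simp only [id]; field_simp)

theorem hasDerivAt_pickT (hu : 0 < u) (hv : 0 < v) (hL : Real.log (u * v) ≠ 0) :
    HasDerivAt (fun x => pickT x v) (-pickT u v / (u * Real.log (u * v))) u := by
  refine ((hasDerivAt_const u (Real.log v)).div (hasDerivAt_log_mul_right hu hv) hL).congr_deriv ?_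
  rw [pickT]
  field_simp
  ring

theorem hasDerivAt_evCopula2_fst (hu : 0 < u) (hv : 0 < v) (hL : Real.log (u * v) ≠ 0)
    (hA : HasDerivAt A (A' (pickT u v)) (pickT u v)) :
    HasDerivAt (fun x => evCopula2 A x v) (evCopula2 A u v * pickMu A A' (pickT u v) / u) u := by
  refine ((hasDerivAt_log_mul_right hu hv).mul
    (hA.comp u (hasDerivAt_pickT hu hv hL))).exp.congr_deriv ?_
  change evCopula2 A u v * _ = _
  simp only [Function.comp_apply, pickMu]
  field_simp
  ring

theorem hasDerivAt_pickMu_pickT (hu : 0 < u) (hv : 0 < v) (hL : Real.log (u * v) ≠ 0)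
    (hA : HasDerivAt A (A' (pickT u v)) (pickT u v))
    (hA' : HasDerivAt A' (A'' (pickT u v)) (pickT u v)) :
    HasDerivAt (fun x => pickMu A A' (pickT x v))
      (pickT u v ^ 2 * A'' (pickT u v) / (u * Real.log (u * v))) u := by
  have hT := hasDerivAt_pickT hu hv hL
  refine ((hA.comp u hT).sub (hT.mul (hA'.comp u hT))).congr_deriv ?_
  simp only [Function.comp_apply]
  field_simp
  ring

theorem hasDerivAt_evCopula2_fst_fst (hu : 0 < u) (hv : 0 < v) (hL : Real.log (u * v) ≠ 0)
    (hLu : Real.log u ≠ 0) (hA : HasDerivAt A (A' (pickT u v)) (pickT u v))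
    (hA' : HasDerivAt A' (A'' (pickT u v)) (pickT u v)) :
    HasDerivAt (fun x => evCopula2 A x v * pickMu A A' (pickT x v) / x)
      (evSecondUU A A' A'' u v) u := by
  refine (((hasDerivAt_evCopula2_fst hu hv hL hA).mul
    (hasDerivAt_pickMu_pickT hu hv hL hA hA')).div (hasDerivAt_id u) hu.ne').congr_deriv ?_
  have hlogu := log_eq_one_sub_pickT_mul hu hv hL
  have h1t : 1 - pickT u v ≠ 0 := by rintro h; rw [h, zero_mul] at hlogu; exact hLu hlogu
  rw [evSecondUU, hlogu]
  simp only [id, Pi.mul_apply]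
  field_simp
  ring

end Copula

section Bounds

variable {A A' A'' : ℝ → ℝ} {u v M : ℝ}

theorem neg_evSecondUU_eq : -evSecondUU A A' A'' u v = evCopula2 A u v / u ^ 2 *
    (pickMu A A' (pickT u v) * (1 - pickMu A A' (pickT u v)) +
      pickT u v * (pickT u v * (1 - pickT u v) * A'' (pickT u v)) / -Real.log u) := by
  rw [evSecondUU]
  ring

theorem neg_evSecondUU_nonneg (hP : IsPickandsFunction A)
    (hA' : ∀ t ∈ Ioo (0 : ℝ) 1, HasDerivAt A (A' t) t)
    (hA'' : ∀ t ∈ Ioo (0 : ℝ) 1, HasDerivAt A' (A'' t) t)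
    (hu : u ∈ Ioo (0 : ℝ) 1) (hv : v ∈ Ioo (0 : ℝ) 1) : 0 ≤ -evSecondUU A A' A'' u v := by
  have ht := pickT_mem_Ioo hu hv
  have hμ := hP.pickMu_mem_Icc ht (hA' _ ht)
  have hA''t := hP.secondDeriv_nonneg hA' ht (hA'' _ ht)
  have hq : 0 < -Real.log u := neg_pos.2 (Real.log_neg hu.1 hu.2)
  have hC : 0 < evCopula2 A u v := evCopula2_pos
  have ht0 := ht.1
  have ht1 : 0 ≤ 1 - pickT u v := by linarith [ht.2]
  have hμ0 := hμ.1
  have hμ1 : 0 ≤ 1 - pickMu A A' (pickT u v) := by linarith [hμ.2]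
  rw [neg_evSecondUU_eq]
  positivity

theorem neg_evSecondUU_le_evCopula2_mul (hP : IsPickandsFunction A)
    (hA' : ∀ t ∈ Ioo (0 : ℝ) 1, HasDerivAt A (A' t) t)
    (hA'' : ∀ t ∈ Ioo (0 : ℝ) 1, HasDerivAt A' (A'' t) t)
    (hM : ∀ t ∈ Ioo (0 : ℝ) 1, t * (1 - t) * A'' t ≤ M)
    (hu : u ∈ Ioo (0 : ℝ) 1) (hv : v ∈ Ioo (0 : ℝ) 1) :
    -evSecondUU A A' A'' u v ≤ evCopula2 A u v / u ^ 2 * (1 + M / -Real.log u) := by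
  have ht := pickT_mem_Ioo hu hv
  have hμ := hP.pickMu_mem_Icc ht (hA' _ ht)
  have hX : 0 ≤ pickT u v * (1 - pickT u v) * A'' (pickT u v) :=
    mul_nonneg (mul_nonneg ht.1.le (sub_nonneg.2 ht.2.le))
      (hP.secondDeriv_nonneg hA' ht (hA'' _ ht))
  have hq : 0 < -Real.log u := neg_pos.2 (Real.log_neg hu.1 hu.2)
  have hμ1 : pickMu A A' (pickT u v) * (1 - pickMu A A' (pickT u v)) ≤ 1 := by
    nlinarith [hμ.1, hμ.2]
  have hX1 : pickT u v * (pickT u v * (1 - pickT u v) * A'' (pickT u v)) ≤ M :=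
    (mul_le_of_le_one_left hX ht.2.le).trans (hM _ ht)
  have hC : 0 ≤ evCopula2 A u v / u ^ 2 := div_nonneg evCopula2_pos.le (sq_nonneg u)
  rw [neg_evSecondUU_eq]
  gcongr

theorem neg_evSecondUU_le_pickT_mul (hP : IsPickandsFunction A)
    (hA' : ∀ t ∈ Ioo (0 : ℝ) 1, HasDerivAt A (A' t) t)
    (hA'' : ∀ t ∈ Ioo (0 : ℝ) 1, HasDerivAt A' (A'' t) t)
    (hM : ∀ t ∈ Ioo (0 : ℝ) 1, t * (1 - t) * A'' t ≤ M)
    (hu : u ∈ Ioo (0 : ℝ) 1) (hv : v ∈ Ioo (0 : ℝ) 1) :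
    -evSecondUU A A' A'' u v ≤ pickT u v * ((2 + M / -Real.log u) / u) := by
  have ht := pickT_mem_Ioo hu hv
  have hμ := hP.pickMu_mem_Icc ht (hA' _ ht)
  have hμ2 := hP.one_sub_pickMu_le ht (hA' _ ht)
  have hq : 0 < -Real.log u := neg_pos.2 (Real.log_neg hu.1 hu.2)
  have hM0 := hP.nonneg_of_mul_secondDeriv_le hA' hA'' hM
  have hC : 0 ≤ evCopula2 A u v / u ^ 2 := div_nonneg evCopula2_pos.le (sq_nonneg u)
  have hCu := evCopula2_div_sq_le hP hu hv
  have hμ1 : pickMu A A' (pickT u v) * (1 - pickMu A A' (pickT u v)) ≤ 2 * pickT u v := by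
    nlinarith [hμ.1, hμ.2]
  have ht0 := ht.1
  calc -evSecondUU A A' A'' u v
      ≤ evCopula2 A u v / u ^ 2 * (2 * pickT u v + pickT u v * M / -Real.log u) := by
        rw [neg_evSecondUU_eq]
        gcongr
        · exact hM _ ht
    _ ≤ 1 / u * (2 * pickT u v + pickT u v * M / -Real.log u) := by gcongr
    _ = pickT u v * ((2 + M / -Real.log u) / u) := by ring

theorem neg_evSecondUU_le_div (hP : IsPickandsFunction A)
    (hA' : ∀ t ∈ Ioo (0 : ℝ) 1, HasDerivAt A (A' t) t)
    (hA'' : ∀ t ∈ Ioo (0 : ℝ) 1, HasDerivAt A' (A'' t) t)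
    (hM : ∀ t ∈ Ioo (0 : ℝ) 1, t * (1 - t) * A'' t ≤ M)
    (hu : u ∈ Ioo (0 : ℝ) 1) (hv : v ∈ Ioo (0 : ℝ) 1) :
    -evSecondUU A A' A'' u v ≤ (1 + M) / (u * (1 - u)) := by
  have hM0 := hP.nonneg_of_mul_secondDeriv_le hA' hA'' hM
  have hCu := evCopula2_div_sq_le hP hu hv
  have hlog : 1 - u ≤ -Real.log u := by linarith [Real.log_le_sub_one_of_pos hu.1]
  have hu1 : 0 < 1 - u := sub_pos.2 hu.2
  have hq : 0 < -Real.log u := hu1.trans_le hlog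
  have hu0 := hu.1
  calc -evSecondUU A A' A'' u v ≤ evCopula2 A u v / u ^ 2 * (1 + M / -Real.log u) :=
        neg_evSecondUU_le_evCopula2_mul hP hA' hA'' hM hu hv
    _ ≤ 1 / u * (1 + M / (1 - u)) := by gcongr
    _ = (1 - u + M) / (u * (1 - u)) := by field_simp
    _ ≤ (1 + M) / (u * (1 - u)) := by gcongr; linarith

theorem tendsto_evSecondUU_nhdsGT_zero (hP : IsPickandsFunction A)
    (hA' : ∀ t ∈ Ioo (0 : ℝ) 1, HasDerivAt A (A' t) t)
    (hA'' : ∀ t ∈ Ioo (0 : ℝ) 1, HasDerivAt A' (A'' t) t)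
    (hM : ∀ t ∈ Ioo (0 : ℝ) 1, t * (1 - t) * A'' t ≤ M) (hu : u ∈ Ioo (0 : ℝ) 1) :
    Tendsto (fun v => evSecondUU A A' A'' u v) (𝓝[>] 0) (𝓝 0) := by
  have hM0 := hP.nonneg_of_mul_secondDeriv_le hA' hA'' hM
  have hq : 0 < -Real.log u := neg_pos.2 (Real.log_neg hu.1 hu.2)
  have hbound : Tendsto (fun v : ℝ => v / u ^ 2 * (1 + M / -Real.log u)) (𝓝[>] 0) (𝓝 0) := by
    have : Continuous fun v : ℝ => v / u ^ 2 * (1 + M / -Real.log u) := by fun_prop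
    simpa using (this.tendsto 0).mono_left nhdsWithin_le_nhds
  have hle : ∀ v ∈ Ioo (0 : ℝ) 1,
      -evSecondUU A A' A'' u v ≤ v / u ^ 2 * (1 + M / -Real.log u) := by
    intro v hv
    have hCv := evCopula2_le_right hP hu hv
    calc -evSecondUU A A' A'' u v ≤ evCopula2 A u v / u ^ 2 * (1 + M / -Real.log u) :=
          neg_evSecondUU_le_evCopula2_mul hP hA' hA'' hM hu hv
      _ ≤ v / u ^ 2 * (1 + M / -Real.log u) := by gcongr
  have hv : ∀ᶠ v in 𝓝[>] (0 : ℝ), v ∈ Ioo (0 : ℝ) 1 := Ioo_mem_nhdsGT one_pos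
  simpa using (squeeze_zero' (hv.mono fun v hv => neg_evSecondUU_nonneg hP hA' hA'' hu hv)
    (hv.mono hle) hbound).neg

theorem tendsto_evSecondUU_nhdsLT_one (hP : IsPickandsFunction A)
    (hA' : ∀ t ∈ Ioo (0 : ℝ) 1, HasDerivAt A (A' t) t)
    (hA'' : ∀ t ∈ Ioo (0 : ℝ) 1, HasDerivAt A' (A'' t) t)
    (hM : ∀ t ∈ Ioo (0 : ℝ) 1, t * (1 - t) * A'' t ≤ M) (hu : u ∈ Ioo (0 : ℝ) 1) :
    Tendsto (fun v => evSecondUU A A' A'' u v) (𝓝[<] 1) (𝓝 0) := by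
  have hLu : Real.log u ≠ 0 := (Real.log_neg hu.1 hu.2).ne
  have hbound : Tendsto (fun v => pickT u v * ((2 + M / -Real.log u) / u)) (𝓝[<] 1) (𝓝 0) := by
    have : ContinuousAt (fun v => pickT u v * ((2 + M / -Real.log u) / u)) 1 := by
      unfold pickT
      fun_prop (disch := simp [hu.1.ne', hLu])
    simpa [pickT] using this.tendsto.mono_left nhdsWithin_le_nhds
  have hv : ∀ᶠ v in 𝓝[<] (1 : ℝ), v ∈ Ioo (0 : ℝ) 1 := Ioo_mem_nhdsLT one_pos
  simpa using (squeeze_zero' (hv.mono fun v hv => neg_evSecondUU_nonneg hP hA' hA'' hu hv)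
    (hv.mono fun v hv => neg_evSecondUU_le_pickT_mul hP hA' hA'' hM hu hv) hbound).neg

end Bounds

theorem evCopula2_second_deriv_uu_general
    (A A' A'' : ℝ → ℝ)
    -- A is a Pickands dependence function
    (hconv : ConvexOn ℝ (Icc (0 : ℝ) 1) A)
    (hbounds : ∀ t ∈ Icc (0 : ℝ) 1, max t (1 - t) ≤ A t ∧ A t ≤ 1)
    -- A is twice continuously differentiable on (0,1)
    (hA' : ∀ t ∈ Ioo (0 : ℝ) 1, HasDerivAt A (A' t) t)
    (hA'' : ∀ t ∈ Ioo (0 : ℝ) 1, HasDerivAt A' (A'' t) t)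
    -- M = sup_{0<t<1} t(1−t)A″(t) < ∞
    (M : ℝ) (hM : ∀ t ∈ Ioo (0 : ℝ) 1, t * (1 - t) * A'' t ≤ M) :
    ∃ D : ℝ → ℝ → ℝ,
      (∀ u ∈ Ioo (0 : ℝ) 1, ∀ v ∈ Ioo (0 : ℝ) 1,
        HasDerivAt (fun x : ℝ => evCopula2 A x v) (D u v) u ∧
        HasDerivAt (fun x : ℝ => D x v) (evSecondUU A A' A'' u v) u ∧
        0 ≤ -evSecondUU A A' A'' u v ∧
        -evSecondUU A A' A'' u v ≤ (1 + M) / (u * (1 - u))) ∧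
      (∀ u ∈ Ioo (0 : ℝ) 1,
        Tendsto (fun v : ℝ => evSecondUU A A' A'' u v) (𝓝[>] 0) (𝓝 0) ∧
        Tendsto (fun v : ℝ => evSecondUU A A' A'' u v) (𝓝[<] 1) (𝓝 0)) := by
  have hP : IsPickandsFunction A :=
    ⟨hconv, fun t ht => (hbounds t ht).1, fun t ht => (hbounds t ht).2⟩
  refine ⟨fun u v => evCopula2 A u v * pickMu A A' (pickT u v) / u, fun u hu v hv => ?_,
    fun u hu => ⟨tendsto_evSecondUU_nhdsGT_zero hP hA' hA'' hM hu,
      tendsto_evSecondUU_nhdsLT_one hP hA' hA'' hM hu⟩⟩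
  have hL := (log_mul_neg hu hv).ne
  have ht := pickT_mem_Ioo hu hv
  exact ⟨hasDerivAt_evCopula2_fst hu.1 hv.1 hL (hA' _ ht),
    hasDerivAt_evCopula2_fst_fst hu.1 hv.1 hL (Real.log_neg hu.1 hu.2).ne (hA' _ ht) (hA'' _ ht),
    neg_evSecondUU_nonneg hP hA' hA'' hu hv, neg_evSecondUU_le_div hP hA' hA'' hM hu hv⟩

/-- **Second derivative in `u` of a bivariate extreme-value copula.** If `A` is twice
continuously differentiable on `(0,1)` with `t(1−t)A″(t) ≤ M` on `(0,1)`, then on `(0,1)²`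
the derivative `∂²C/∂u²` exists, equals
`(C(u,v)/u²)(−μ(t)(1−μ(t)) + t²(1−t)A″(t)/log u)`, satisfies
`0 ≤ −∂²C/∂u² ≤ (1+M)/(u(1−u))`, and for each fixed `u` tends to `0` as `v ↓ 0` and as
`v ↑ 1`. -/
theorem evCopula2_second_deriv_uu
    (A A' A'' : ℝ → ℝ)
    -- A is a Pickands dependence function
    (hconv : ConvexOn ℝ (Icc (0 : ℝ) 1) A)
    (hbounds : ∀ t ∈ Icc (0 : ℝ) 1, max t (1 - t) ≤ A t ∧ A t ≤ 1)
    -- A is twice continuously differentiable on (0,1)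
    (hA' : ∀ t ∈ Ioo (0 : ℝ) 1, HasDerivAt A (A' t) t)
    (hA'' : ∀ t ∈ Ioo (0 : ℝ) 1, HasDerivAt A' (A'' t) t)
    (hA''cont : ContinuousOn A'' (Ioo (0 : ℝ) 1))
    -- M = sup_{0<t<1} t(1−t)A″(t) < ∞
    (M : ℝ) (hM : ∀ t ∈ Ioo (0 : ℝ) 1, t * (1 - t) * A'' t ≤ M) :
    ∃ D : ℝ → ℝ → ℝ,
      (∀ u ∈ Ioo (0 : ℝ) 1, ∀ v ∈ Ioo (0 : ℝ) 1,
        HasDerivAt (fun x : ℝ => evCopula2 A x v) (D u v) u ∧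
        HasDerivAt (fun x : ℝ => D x v) (evSecondUU A A' A'' u v) u ∧
        0 ≤ -evSecondUU A A' A'' u v ∧
        -evSecondUU A A' A'' u v ≤ (1 + M) / (u * (1 - u))) ∧
      (∀ u ∈ Ioo (0 : ℝ) 1,
        Tendsto (fun v : ℝ => evSecondUU A A' A'' u v) (𝓝[>] 0) (𝓝 0) ∧
        Tendsto (fun v : ℝ => evSecondUU A A' A'' u v) (𝓝[<] 1) (𝓝 0)) :=
  evCopula2_second_deriv_uu_general A A' A'' hconv hbounds hA' hA'' M hM

end
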